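/- arXiv:2407.20378 — 2 statements merged into one kernel-verified Lean document; each statement's English description precedes it below -/
import Mathlib

section
/- Let K be a field of characteristic different from 2, let a₁, …, aₙ ∈ K, and let f ∈ K[x] be a polynomial in one variable. If there exist rational functions r₁, …, rₙ ∈ K(x) such that f = a₁r₁² + ⋯ + aₙrₙ², then there exist polynomials p₁, …, pₙ ∈ K[x] such that f = a₁p₁² + ⋯ + aₙpₙ². -/
open Polynomial

private lemma coeff_sq_two_mul {K : Type*} [CommRing K] (s : Polynomial K) (m : ℕ)
    (hs : s.natDegree ≤ m) : (s ^ 2).coeff (2 * m) = (s.coeff m) ^ 2 := by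
  rw [sq, Polynomial.coeff_mul, sq]
  rw [Finset.sum_eq_single (m, m)]
  · intro b hb hbne
    rw [Finset.HasAntidiagonal.mem_antidiagonal] at hb
    rcases lt_or_ge m b.1 with h1 | h1
    · rw [Polynomial.coeff_eq_zero_of_natDegree_lt (lt_of_le_of_lt hs h1), zero_mul]
    · have h2 : m < b.2 := by
        rcases lt_or_eq_of_le h1 with h | h
        · omega
        · exfalso; apply hbne; rw [Prod.ext_iff]; constructor <;> simp <;> omega
      rw [Polynomial.coeff_eq_zero_of_natDegree_lt (lt_of_le_of_lt hs h2), mul_zero]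
  · intro hmem
    exfalso; apply hmem; rw [Finset.HasAntidiagonal.mem_antidiagonal]; ring

private lemma aniso_poly {K : Type*} [Field K] {n : ℕ} (a : Fin n → K)
    (han : ∀ c : Fin n → K, ∑ i, a i * c i ^ 2 = 0 → ∀ j, a j * c j = 0)
    (s : Fin n → Polynomial K) (hs0 : ∀ i, a i = 0 → s i = 0)
    (hsum : ∑ i, Polynomial.C (a i) * s i ^ 2 = 0) : ∀ i, s i = 0 := by
  by_contra hcon
  push_neg at hcon
  obtain ⟨i₀, hi₀⟩ := hcon
  obtain ⟨j, -, hj⟩ := Finset.exists_max_image Finset.univ (fun i => (s i).degree)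
    ⟨i₀, Finset.mem_univ i₀⟩
  have hsj : s j ≠ 0 := by
    intro h0
    apply hi₀
    have hle := hj i₀ (Finset.mem_univ i₀)
    rw [h0, Polynomial.degree_zero] at hle
    exact Polynomial.degree_eq_bot.mp (le_bot_iff.mp hle)
  set m := (s j).natDegree with hm
  have hdeg : ∀ i, (s i).natDegree ≤ m := by
    intro i
    by_cases h0 : s i = 0
    · simp [h0]
    · exact Polynomial.natDegree_le_natDegree (hj i (Finset.mem_univ i))
  have key : ∑ i, a i * ((s i).coeff m) ^ 2 = 0 := by
    have hcoeff := congrArg (fun q => Polynomial.coeff q (2 * m)) hsum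
    simp only [Polynomial.finset_sum_coeff, Polynomial.coeff_C_mul,
      Polynomial.coeff_zero] at hcoeff
    rw [← hcoeff]
    apply Finset.sum_congr rfl
    intro i _
    rw [coeff_sq_two_mul _ _ (hdeg i)]
  have hz := han _ key j
  have haj : a j ≠ 0 := fun h => hsj (hs0 j h)
  have hcj : (s j).coeff m ≠ 0 := by
    rw [hm, Polynomial.coeff_natDegree]
    exact Polynomial.leadingCoeff_ne_zero.mpr hsj
  exact hcj ((mul_eq_zero.mp hz).resolve_left haj)

private lemma clear_denoms {K : Type*} [Field K] {n : ℕ} (a : Fin n → K) (f : Polynomial K)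
    (r : Fin n → RatFunc K)
    (h : algebraMap (Polynomial K) (RatFunc K) f
      = ∑ i, algebraMap K (RatFunc K) (a i) * r i ^ 2) :
    ∃ (d : Polynomial K) (p : Fin n → Polynomial K), d ≠ 0 ∧
      f * d ^ 2 = ∑ i, Polynomial.C (a i) * p i ^ 2 := by
  set φ := algebraMap (Polynomial K) (RatFunc K) with hφ
  have hinj : Function.Injective φ := IsFractionRing.injective _ _
  set D : Polynomial K := ∏ j, (r j).denom with hD
  have hDne : D ≠ 0 := Finset.prod_ne_zero_iff.mpr fun j _ => (r j).denom_ne_zero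
  set p : Fin n → Polynomial K :=
    fun i => (r i).num * ∏ j ∈ Finset.univ.erase i, (r j).denom with hpdef
  have hp : ∀ i, φ (p i) = r i * φ D := by
    intro i
    have hsplit : D = (r i).denom * ∏ j ∈ Finset.univ.erase i, (r j).denom :=
      (Finset.mul_prod_erase _ _ (Finset.mem_univ i)).symm
    have hdne : φ ((r i).denom) ≠ 0 :=
      (map_ne_zero_iff φ hinj).mpr (r i).denom_ne_zero
    have hnum : φ ((r i).num) = r i * φ ((r i).denom) := by
      have h0 : φ ((r i).num) / φ ((r i).denom) = r i := RatFunc.num_div_denom (r i)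
      have h1 := congrArg (fun z => z * φ ((r i).denom)) h0
      simpa [div_mul_cancel₀ _ hdne] using h1
    calc φ (p i) = φ ((r i).num) * φ (∏ j ∈ Finset.univ.erase i, (r j).denom) := map_mul _ _ _
      _ = r i * (φ ((r i).denom) * φ (∏ j ∈ Finset.univ.erase i, (r j).denom)) := by
          rw [hnum]; ring
      _ = r i * φ D := by rw [← map_mul, ← hsplit]
  refine ⟨D, p, hDne, hinj ?_⟩
  rw [map_mul, map_pow, h, Finset.sum_mul, map_sum]
  apply Finset.sum_congr rfl
  intro i _
  rw [map_mul, map_pow, RatFunc.algebraMap_C, ← RatFunc.algebraMap_eq_C, hp i]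
  ring

private lemma iso_case {K : Type*} [Field K] (h2 : (2 : K) ≠ 0) {n : ℕ} (a : Fin n → K)
    (f : Polynomial K) (c : Fin n → K) (hc : ∑ i, a i * c i ^ 2 = 0)
    (j : Fin n) (hj : a j * c j ≠ 0) :
    ∃ p : Fin n → Polynomial K, f = ∑ i, Polynomial.C (a i) * p i ^ 2 := by
  have h2ac : (2 * a j * c j) ≠ 0 := by
    rw [mul_assoc]; exact mul_ne_zero h2 hj
  set t : Polynomial K := Polynomial.C (2 * a j * c j)⁻¹ * (f - Polynomial.C (a j)) with ht
  refine ⟨fun i => Polynomial.C (c i) * t + if i = j then 1 else 0, ?_⟩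
  have key : ∀ i, Polynomial.C (a i) * (Polynomial.C (c i) * t + if i = j then 1 else 0) ^ 2
      = Polynomial.C (a i * c i ^ 2) * t ^ 2
        + (if i = j then Polynomial.C (2 * a j * c j) * t + Polynomial.C (a j) else 0) := by
    intro i
    by_cases hij : i = j
    · subst hij
      simp only [if_pos]
      simp only [map_mul, map_pow, map_ofNat]
      ring
    · simp only [if_neg hij, map_mul, map_pow, add_zero]
      ring
  calc f = (∑ i, Polynomial.C (a i * c i ^ 2)) * t ^ 2
        + (Polynomial.C (2 * a j * c j) * t + Polynomial.C (a j)) := by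
        rw [← map_sum, hc, map_zero, zero_mul, zero_add, ht, ← mul_assoc, ← map_mul,
          mul_inv_cancel₀ h2ac, map_one, one_mul]
        ring
    _ = ∑ i, (Polynomial.C (a i * c i ^ 2) * t ^ 2
        + (if i = j then Polynomial.C (2 * a j * c j) * t + Polynomial.C (a j) else 0)) := by
        rw [Finset.sum_add_distrib, ← Finset.sum_mul, Finset.sum_ite_eq' Finset.univ j
          (fun _ => Polynomial.C (2 * a j * c j) * t + Polynomial.C (a j))]
        simp
    _ = ∑ i, Polynomial.C (a i) * (Polynomial.C (c i) * t + if i = j then 1 else 0) ^ 2 :=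
        Finset.sum_congr rfl fun i _ => (key i).symm

private lemma descent {K : Type*} [Field K] {n : ℕ} (a : Fin n → K)
    (han : ∀ c : Fin n → K, ∑ i, a i * c i ^ 2 = 0 → ∀ j, a j * c j = 0)
    (f : Polynomial K) :
    ∀ N : ℕ, ∀ d : Polynomial K, ∀ p : Fin n → Polynomial K,
      d.natDegree ≤ N → d ≠ 0 → (∀ i, a i = 0 → p i = 0) →
      f * d ^ 2 = ∑ i, Polynomial.C (a i) * p i ^ 2 →
      ∃ q : Fin n → Polynomial K, f = ∑ i, Polynomial.C (a i) * q i ^ 2 := by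
  intro N
  induction N with
  | zero =>
    intro d p hdN hdne _ hd
    -- d is a nonzero constant
    have hnd : d.natDegree = 0 := Nat.le_zero.mp hdN
    obtain ⟨u, hu⟩ : ∃ u : K, d = Polynomial.C u := ⟨d.coeff 0, Polynomial.eq_C_of_natDegree_eq_zero hnd⟩
    have hune : u ≠ 0 := fun h0 => hdne (by rw [hu, h0, map_zero])
    refine ⟨fun i => Polynomial.C u⁻¹ * p i, ?_⟩
    have hone : (Polynomial.C u⁻¹) ^ 2 * d ^ 2 = 1 := by
      rw [hu, ← mul_pow, ← map_mul, inv_mul_cancel₀ hune, map_one, one_pow]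
    calc f = (Polynomial.C u⁻¹) ^ 2 * (f * d ^ 2) := by
          rw [show (Polynomial.C u⁻¹) ^ 2 * (f * d ^ 2)
            = f * ((Polynomial.C u⁻¹) ^ 2 * d ^ 2) by ring, hone, mul_one]
      _ = (Polynomial.C u⁻¹) ^ 2 * ∑ i, Polynomial.C (a i) * p i ^ 2 := by rw [hd]
      _ = ∑ i, Polynomial.C (a i) * (Polynomial.C u⁻¹ * p i) ^ 2 := by
          rw [Finset.mul_sum]
          exact Finset.sum_congr rfl fun i _ => by ring
  | succ N ih =>
    intro d p hdN hdne hp0 hd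
    by_cases hnd : d.natDegree = 0
    · -- constant denominator again
      obtain ⟨u, hu⟩ : ∃ u : K, d = Polynomial.C u :=
        ⟨d.coeff 0, Polynomial.eq_C_of_natDegree_eq_zero hnd⟩
      have hune : u ≠ 0 := fun h0 => hdne (by rw [hu, h0, map_zero])
      refine ⟨fun i => Polynomial.C u⁻¹ * p i, ?_⟩
      have hone : (Polynomial.C u⁻¹) ^ 2 * d ^ 2 = 1 := by
        rw [hu, ← mul_pow, ← map_mul, inv_mul_cancel₀ hune, map_one, one_pow]
      calc f = (Polynomial.C u⁻¹) ^ 2 * (f * d ^ 2) := by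
            rw [show (Polynomial.C u⁻¹) ^ 2 * (f * d ^ 2)
              = f * ((Polynomial.C u⁻¹) ^ 2 * d ^ 2) by ring, hone, mul_one]
        _ = (Polynomial.C u⁻¹) ^ 2 * ∑ i, Polynomial.C (a i) * p i ^ 2 := by rw [hd]
        _ = ∑ i, Polynomial.C (a i) * (Polynomial.C u⁻¹ * p i) ^ 2 := by
            rw [Finset.mul_sum]
            exact Finset.sum_congr rfl fun i _ => by ring
    · -- make d monic
      set l := d.leadingCoeff with hl
      have hlne : l ≠ 0 := Polynomial.leadingCoeff_ne_zero.mpr hdne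
      set d₁ := d * Polynomial.C l⁻¹ with hd₁def
      have hm : d₁.Monic := Polynomial.monic_mul_leadingCoeff_inv hdne
      have hd₁ne : d₁ ≠ 0 := hm.ne_zero
      have hnd₁ : d₁.natDegree = d.natDegree := by
        rw [hd₁def, Polynomial.natDegree_mul_C (inv_ne_zero hlne)]
      set p₁ : Fin n → Polynomial K := fun i => p i * Polynomial.C l⁻¹ with hp₁def
      have hd1 : f * d₁ ^ 2 = ∑ i, Polynomial.C (a i) * p₁ i ^ 2 := by
        calc f * d₁ ^ 2 = (f * d ^ 2) * (Polynomial.C l⁻¹) ^ 2 := by rw [hd₁def]; ring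
          _ = (∑ i, Polynomial.C (a i) * p i ^ 2) * (Polynomial.C l⁻¹) ^ 2 := by rw [hd]
          _ = ∑ i, Polynomial.C (a i) * p₁ i ^ 2 := by
              rw [Finset.sum_mul]
              exact Finset.sum_congr rfl fun i _ => by rw [hp₁def]; ring
      set s : Fin n → Polynomial K := fun i => p₁ i %ₘ d₁ with hsdef
      set c : Fin n → Polynomial K := fun i => p₁ i /ₘ d₁ with hcdef
      have hps : ∀ i, s i = p₁ i - d₁ * c i := by
        intro i
        have h := Polynomial.modByMonic_add_div (p₁ i) d₁
        rw [hsdef, hcdef]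
        rw [eq_sub_iff_add_eq]
        exact h
      have hs0 : ∀ i, a i = 0 → s i = 0 := by
        intro i h0
        rw [hsdef]
        simp only []
        rw [hp₁def]
        simp only []
        rw [hp0 i h0, zero_mul, Polynomial.zero_modByMonic]
      have hc0 : ∀ i, a i = 0 → c i = 0 := by
        intro i h0
        rw [hcdef]
        simp only []
        rw [hp₁def]
        simp only []
        rw [hp0 i h0, zero_mul, Polynomial.zero_divByMonic]
      have hsmall : ∀ i, (s i).degree < d₁.degree := fun i =>
        Polynomial.degree_modByMonic_lt (p₁ i) hm
      by_cases hsz : ∀ i, s i = 0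
      · -- exact division: r was already polynomial
        refine ⟨c, ?_⟩
        have hcancel : d₁ ^ 2 * f = d₁ ^ 2 * ∑ i, Polynomial.C (a i) * c i ^ 2 := by
          calc d₁ ^ 2 * f = f * d₁ ^ 2 := by ring
            _ = ∑ i, Polynomial.C (a i) * p₁ i ^ 2 := hd1
            _ = ∑ i, d₁ ^ 2 * (Polynomial.C (a i) * c i ^ 2) := by
                refine Finset.sum_congr rfl fun i _ => ?_
                have hpi : p₁ i = d₁ * c i := by
                  have h := hps i; rw [hsz i] at h
                  exact sub_eq_zero.mp h.symm
                rw [hpi]; ring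
            _ = d₁ ^ 2 * ∑ i, Polynomial.C (a i) * c i ^ 2 := (Finset.mul_sum _ _ _).symm
        exact mul_left_cancel₀ (pow_ne_zero 2 hd₁ne) hcancel
      · push_neg at hsz
        obtain ⟨i₀, hi₀⟩ := hsz
        set Q : Polynomial K := ∑ i, Polynomial.C (a i) * c i ^ 2 with hQ
        set P : Polynomial K := ∑ i, Polynomial.C (a i) * p₁ i * c i with hP
        set e : Polynomial K := f * d₁ - 2 * P + d₁ * Q with he
        -- key identity:  d₁ * e = ∑ aᵢ sᵢ²
        have id1 : ∑ i, Polynomial.C (a i) * s i ^ 2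
            = f * d₁ ^ 2 - 2 * d₁ * P + d₁ ^ 2 * Q := by
          calc ∑ i, Polynomial.C (a i) * s i ^ 2
              = ∑ i, (Polynomial.C (a i) * p₁ i ^ 2
                - 2 * d₁ * (Polynomial.C (a i) * p₁ i * c i)
                + d₁ ^ 2 * (Polynomial.C (a i) * c i ^ 2)) := by
                refine Finset.sum_congr rfl fun i _ => ?_
                rw [hps i]; ring
            _ = (∑ i, Polynomial.C (a i) * p₁ i ^ 2)
                - (∑ i, 2 * d₁ * (Polynomial.C (a i) * p₁ i * c i))
                + ∑ i, d₁ ^ 2 * (Polynomial.C (a i) * c i ^ 2) := by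
                rw [Finset.sum_add_distrib, Finset.sum_sub_distrib]
            _ = f * d₁ ^ 2 - 2 * d₁ * P + d₁ ^ 2 * Q := by
                rw [← hd1, hP, hQ, ← Finset.mul_sum, ← Finset.mul_sum]
        have hde : d₁ * e = ∑ i, Polynomial.C (a i) * s i ^ 2 := by
          rw [id1, he]; ring
        have id2 : ∑ i, Polynomial.C (a i) * c i * s i = P - d₁ * Q := by
          calc ∑ i, Polynomial.C (a i) * c i * s i
              = ∑ i, (Polynomial.C (a i) * p₁ i * c i
                - d₁ * (Polynomial.C (a i) * c i ^ 2)) := by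
                refine Finset.sum_congr rfl fun i _ => ?_
                rw [hps i]; ring
            _ = P - d₁ * Q := by
                rw [Finset.sum_sub_distrib, hP, hQ, ← Finset.mul_sum]
        have hsumne : ∑ i, Polynomial.C (a i) * s i ^ 2 ≠ 0 := by
          intro h0
          exact hi₀ (aniso_poly a han s hs0 h0 i₀)
        have hene : e ≠ 0 := by
          intro h0
          rw [h0, mul_zero] at hde
          exact hsumne hde.symm
        set u : Fin n → Polynomial K := fun i => e * c i + (Q - f) * s i with hu
        have hu0 : ∀ i, a i = 0 → u i = 0 := by
          intro i h0
          rw [hu]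
          simp only []
          rw [hc0 i h0, hs0 i h0, mul_zero, mul_zero, add_zero]
        have hfu : f * e ^ 2 = ∑ i, Polynomial.C (a i) * u i ^ 2 := by
          have expand : ∑ i, Polynomial.C (a i) * u i ^ 2
              = e ^ 2 * Q + 2 * e * (Q - f) * (∑ i, Polynomial.C (a i) * c i * s i)
                + (Q - f) ^ 2 * ∑ i, Polynomial.C (a i) * s i ^ 2 := by
            calc ∑ i, Polynomial.C (a i) * u i ^ 2
                = ∑ i, (e ^ 2 * (Polynomial.C (a i) * c i ^ 2)
                  + 2 * e * (Q - f) * (Polynomial.C (a i) * c i * s i)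
                  + (Q - f) ^ 2 * (Polynomial.C (a i) * s i ^ 2)) := by
                  refine Finset.sum_congr rfl fun i _ => ?_
                  rw [hu]; ring
              _ = _ := by
                  rw [Finset.sum_add_distrib, Finset.sum_add_distrib, ← Finset.mul_sum,
                    ← Finset.mul_sum, ← Finset.mul_sum, hQ]
          rw [expand, id2, ← hde, he]
          ring
        -- degree bounds
        have hnd1pos : 1 ≤ d₁.natDegree := by
          rw [hnd₁]; omega
        have hnds : ∀ i, (s i).natDegree ≤ d₁.natDegree - 1 := by
          intro i
          by_cases h0 : s i = 0
          · simp [h0]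
          · have := Polynomial.natDegree_lt_natDegree h0 (hsmall i)
            omega
        have hsumdeg : (∑ i, Polynomial.C (a i) * s i ^ 2).natDegree
            ≤ 2 * (d₁.natDegree - 1) := by
          refine le_trans (Polynomial.natDegree_sum_le _ _) ?_
          rw [Finset.fold_max_le]
          refine ⟨by omega, fun i _ => ?_⟩
          refine le_trans (Polynomial.natDegree_C_mul_le _ _) ?_
          rw [Polynomial.natDegree_pow]
          have := hnds i
          omega
        have hedeg : e.natDegree ≤ N := by
          have hmul : d₁.natDegree + e.natDegree = (d₁ * e).natDegree :=
            (Polynomial.natDegree_mul hd₁ne hene).symm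
          rw [hde] at hmul
          have h1 : d₁.natDegree ≤ N + 1 := by rw [hnd₁]; exact hdN
          omega
        exact ih e u hedeg hene hu0 hfu

/-- Theorem of Cassels: Let `K` be a field of characteristic different
from 2, let `a₁, …, aₙ ∈ K` and `f ∈ K[x]`. If there are rational functions
`r₁, …, rₙ ∈ K(x)` with `f = a₁r₁² + ⋯ + aₙrₙ²`, then there are polynomials
`p₁, …, pₙ ∈ K[x]` with `f = a₁p₁² + ⋯ + aₙpₙ²`. -/
theorem cassels_diagonal_form (K : Type*) [Field K] (hchar : ringChar K ≠ 2)
    (n : ℕ) (a : Fin n → K) (f : Polynomial K)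
    (h : ∃ r : Fin n → RatFunc K,
      algebraMap (Polynomial K) (RatFunc K) f =
        ∑ i, algebraMap K (RatFunc K) (a i) * r i ^ 2) :
    ∃ p : Fin n → Polynomial K, f = ∑ i, Polynomial.C (a i) * p i ^ 2 := by
  obtain ⟨r, hr⟩ := h
  by_cases hiso : ∃ c : Fin n → K, (∑ i, a i * c i ^ 2 = 0) ∧ ∃ j, a j * c j ≠ 0
  · obtain ⟨c, hc, j, hj⟩ := hiso
    exact iso_case (Ring.two_ne_zero hchar) a f c hc j hj
  · push_neg at hiso
    classical
    obtain ⟨d, p, hdne, hd⟩ := clear_denoms a f r hr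
    set p' : Fin n → Polynomial K := fun i => if a i = 0 then 0 else p i with hp'
    have hd' : f * d ^ 2 = ∑ i, Polynomial.C (a i) * p' i ^ 2 := by
      rw [hd]
      refine Finset.sum_congr rfl fun i _ => ?_
      by_cases h0 : a i = 0 <;> simp [hp', h0]
    exact descent a hiso f d.natDegree d p' le_rfl hdne
      (fun i h0 => by simp [hp', h0]) hd'
end

section
/- Let K be a formally real field, let S ⊆ K[x,y] be the multiplicative set of all polynomials g with g(a,b) ≠ 0 for every (a,b) ∈ K², and let O = S⁻¹K[x,y]. Then for every positive integer N the following are equivalent: (i) every element of O that is a sum of squares in O is a sum of N squares in O; (ii) every element of K(x,y) that is a sum of squares in K(x,y) is a sum of N squares in K(x,y). In other words, the Pythagoras number of O equals the Pythagoras number of K(x,y). -/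
open MvPolynomial



section Helpers

theorem mySumSq {R : Type*} [CommRing R] {ι : Type*} (s : Finset ι) (f : ι → R) :
    IsSumSq (∑ i ∈ s, f i ^ 2) := by
  simpa [sq] using isSumSq_sum_mul_self s f

theorem myExistsRep {R : Type*} [CommRing R] {a : R} (h : IsSumSq a) :
    ∃ (n : ℕ) (f : Fin n → R), a = ∑ i, f i ^ 2 := by
  induction h with
  | zero => exact ⟨0, ![], by simp⟩
  | sq_add a _ ih =>
    obtain ⟨n, f, rfl⟩ := ih
    exact ⟨n + 1, Fin.cons a f, by simp [Fin.sum_univ_succ, sq]⟩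

theorem myMapSumSq {R S : Type*} [CommRing R] [CommRing S] (g : R →+* S) {a : R}
    (h : IsSumSq a) : IsSumSq (g a) := by
  induction h with
  | zero => simpa using IsSumSq.zero
  | sq_add a _ ih => simpa [map_add, map_mul] using IsSumSq.sq_add (g a) ih

theorem myCharZero {F : Type*} [Field F] (hF : ¬ IsSumSq (-1 : F)) : CharZero F := by
  have hnat : ∀ n : ℕ, IsSumSq ((n : F)) := by
    intro n
    induction n with
    | zero => simpa using IsSumSq.zero
    | succ n ih =>
      have := IsSumSq.sq_add 1 ih
      rw [one_mul] at this
      convert this using 1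
      push_cast; ring
  rcases CharP.char_is_prime_or_zero F (ringChar F) with hp | h0
  · exfalso
    have h2 : (2 : ℕ) ≤ ringChar F := hp.two_le
    have hcast : ((ringChar F : ℕ) : F) = 0 := CharP.cast_eq_zero F (ringChar F)
    apply hF
    have : (-1 : F) = ((ringChar F - 1 : ℕ) : F) := by
      rw [Nat.cast_sub (by omega)]
      rw [hcast]; simp
    rw [this]
    exact hnat _
  · haveI : CharP F 0 := h0 ▸ ringChar.charP F
    exact CharP.charP_to_charZero F

end Helpers
section Helpers2

theorem mySumSqZeroField {F : Type*} [Field F] (hF : ¬ IsSumSq (-1 : F))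
    {ι : Type*} (s : Finset ι) (f : ι → F) (h : ∑ i ∈ s, f i ^ 2 = 0) :
    ∀ i ∈ s, f i = 0 := by
  classical
  intro j hj
  by_contra hfj
  apply hF
  have hsum : ∑ i ∈ s.erase j, f i ^ 2 = - f j ^ 2 := by
    have h2 := Finset.sum_erase_add s (fun i => f i ^ 2) hj
    linear_combination h2 + h
  have key : (-1 : F) = ∑ i ∈ s.erase j, (f i / f j) ^ 2 := by
    simp only [div_pow]
    rw [← Finset.sum_div, hsum, neg_div, div_self (pow_ne_zero 2 hfj)]
  rw [key]
  exact mySumSq _ _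

theorem mySumSqZeroPoly {F : Type*} [Field F] (hF : ¬ IsSumSq (-1 : F))
    {ι : Type*} (s : Finset ι) (f : ι → Polynomial F) (h : ∑ i ∈ s, f i ^ 2 = 0) :
    ∀ i ∈ s, f i = 0 := by
  haveI : CharZero F := myCharZero hF
  intro j hj
  apply Polynomial.funext
  intro r
  simp only [Polynomial.eval_zero]
  refine mySumSqZeroField hF s (fun i => (f i).eval r) ?_ j hj
  have := congrArg (Polynomial.eval r) h
  simpa [Polynomial.eval_finset_sum] using this

theorem myFracPolyFormallyReal {F : Type*} [Field F] (hF : ¬ IsSumSq (-1 : F)) :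
    ¬ IsSumSq (-1 : FractionRing (Polynomial F)) := by
  intro h
  obtain ⟨n, r, hr⟩ := myExistsRep h
  obtain ⟨b, hb⟩ := IsLocalization.exist_integer_multiples_of_finite
    (nonZeroDivisors (Polynomial F)) r
  choose a ha using hb
  have ha' : ∀ i, algebraMap (Polynomial F) (FractionRing (Polynomial F)) (a i)
      = algebraMap (Polynomial F) (FractionRing (Polynomial F)) (b : Polynomial F) * r i :=
    fun i => (ha i).trans (Algebra.smul_def _ _)
  have key : algebraMap (Polynomial F) (FractionRing (Polynomial F)) (∑ i, a i ^ 2 + (b : Polynomial F) ^ 2) = 0 := by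
    rw [map_add, map_sum, map_pow]
    calc (∑ i, algebraMap (Polynomial F) (FractionRing (Polynomial F)) (a i ^ 2))
          + algebraMap (Polynomial F) (FractionRing (Polynomial F)) (b : Polynomial F) ^ 2
        = algebraMap (Polynomial F) (FractionRing (Polynomial F)) (b : Polynomial F) ^ 2
            * (∑ i, r i ^ 2 + 1) := by
          rw [mul_add, mul_one, Finset.mul_sum]
          simp only [map_pow, ha', mul_pow]
      _ = 0 := by rw [← hr]; ring
  have h0 : ∑ i, a i ^ 2 + (b : Polynomial F) ^ 2 = 0 :=
    IsFractionRing.injective (Polynomial F) (FractionRing (Polynomial F))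
      (by rw [key, map_zero])
  have hb0 : (b : Polynomial F) = 0 := by
    have := mySumSqZeroPoly hF Finset.univ (Fin.snoc a (b : Polynomial F) : Fin (n+1) → Polynomial F)
      (by rw [Fin.sum_univ_castSucc]; simpa using h0) (Fin.last n) (Finset.mem_univ _)
    simpa using this
  exact nonZeroDivisors.coe_ne_zero b hb0

end Helpers2
section CP

open Polynomial in
theorem myCPdescent {F : Type*} [Field F] (hF : ¬ IsSumSq (-1 : F)) {N : ℕ} (p : Polynomial F) :
    ∀ (n : ℕ) (b : Polynomial F), b ≠ 0 → b.natDegree ≤ n →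
      ∀ a : Fin N → Polynomial F, b ^ 2 * p = ∑ i, a i ^ 2 →
      ∃ q : Fin N → Polynomial F, p = ∑ i, q i ^ 2 := by
  intro n
  induction n with
  | zero =>
    intro b hb hdeg a hid
    obtain ⟨c, hc⟩ := Polynomial.natDegree_eq_zero.mp (Nat.le_zero.mp hdeg)
    have hc0 : c ≠ 0 := by rintro rfl; simp at hc; exact hb hc.symm
    refine ⟨fun i => Polynomial.C c⁻¹ * a i, ?_⟩
    have h1 : ∑ i, (Polynomial.C c⁻¹ * a i) ^ 2 = (Polynomial.C c⁻¹) ^ 2 * ∑ i, a i ^ 2 := by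
      rw [Finset.mul_sum]; exact Finset.sum_congr rfl fun i _ => by ring
    rw [h1, ← hid, ← hc]
    rw [show (Polynomial.C c⁻¹) ^ 2 * ((Polynomial.C c) ^ 2 * p)
        = (Polynomial.C (c⁻¹ * c)) ^ 2 * p by rw [Polynomial.C_mul]; ring]
    rw [inv_mul_cancel₀ hc0]
    simp
  | succ n ih =>
    intro b hb hdeg a hid
    have hu0 : (b.leadingCoeff)⁻¹ ≠ 0 := inv_ne_zero (leadingCoeff_ne_zero.mpr hb)
    set u : F := (b.leadingCoeff)⁻¹ with hu
    set b1 : Polynomial F := b * Polynomial.C u with hb1def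
    have hmon : b1.Monic := monic_mul_leadingCoeff_inv hb
    have hb10 : b1 ≠ 0 := hmon.ne_zero
    have hdeg1 : b1.natDegree ≤ n + 1 := by
      rw [hb1def, natDegree_mul hb (C_ne_zero.mpr hu0), natDegree_C, add_zero]
      exact hdeg
    set a1 : Fin N → Polynomial F := fun i => a i * Polynomial.C u with ha1def
    have hid1 : b1 ^ 2 * p = ∑ i, a1 i ^ 2 := by
      have h1 : ∑ i, a1 i ^ 2 = (Polynomial.C u) ^ 2 * ∑ i, a i ^ 2 := by
        rw [Finset.mul_sum]; refine Finset.sum_congr rfl fun i _ => ?_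
        rw [ha1def]; ring
      rw [h1, ← hid, hb1def]; ring
    clear hid hdeg hb
    set c : Fin N → Polynomial F := fun i => a1 i %ₘ b1 with hcdef
    set q : Fin N → Polynomial F := fun i => a1 i /ₘ b1 with hqdef
    have hsplit : ∀ i, a1 i = b1 * q i + c i := by
      intro i
      have h := modByMonic_add_div (a1 i) b1
      rw [hcdef, hqdef]; linear_combination -h
    by_cases hc : ∀ i, c i = 0
    · refine ⟨q, ?_⟩
      have h2 : ∑ i, a1 i ^ 2 = b1 ^ 2 * ∑ i, q i ^ 2 := by
        rw [Finset.mul_sum]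
        refine Finset.sum_congr rfl fun i _ => ?_
        rw [hsplit i, hc i]; ring
      rw [h2] at hid1
      exact mul_left_cancel₀ (pow_ne_zero 2 hb10) hid1
    · push_neg at hc
      obtain ⟨j, hj⟩ := hc
      have hdpos : 1 ≤ b1.natDegree := by
        by_contra hlt
        have hb1one : b1 = 1 := hmon.natDegree_eq_zero.mp (by omega)
        apply hj
        rw [hcdef]; simp only [hb1one, modByMonic_one]
      set T : Polynomial F := ∑ i, a1 i * q i with hT
      set Q : Polynomial F := ∑ i, q i ^ 2 with hQ
      set e : Polynomial F := b1 * p - T with he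
      set b' : Polynomial F := b1 * p - 2 * T + b1 * Q with hb'
      set a' : Fin N → Polynomial F := fun i => q i * b' + c i * (Q - p) with ha'
      have hcsub : ∀ i : Fin N, c i = a1 i - b1 * q i := fun i => by
        linear_combination -hsplit i
      have f2 : b1 * b' = ∑ i, c i ^ 2 := by
        have hexp : ∀ i : Fin N, c i ^ 2
            = a1 i ^ 2 - (a1 i * q i) * (2 * b1) + q i ^ 2 * b1 ^ 2 := by
          intro i; rw [hcsub i]; ring
        have hs : ∑ i, c i ^ 2
            = ∑ i, (a1 i ^ 2 - (a1 i * q i) * (2 * b1) + q i ^ 2 * b1 ^ 2) :=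
          Finset.sum_congr rfl fun i _ => hexp i
        rw [hs, Finset.sum_add_distrib, Finset.sum_sub_distrib, ← Finset.sum_mul,
          ← Finset.sum_mul, ← hT, ← hQ, ← hid1, hb']
        ring
      have hac : ∑ i, a1 i * c i = b1 * e := by
        have hexp2 : ∀ i : Fin N, a1 i * c i = a1 i ^ 2 - (a1 i * q i) * b1 := by
          intro i; rw [hcsub i]; ring
        have hs : ∑ i, a1 i * c i = ∑ i, (a1 i ^ 2 - (a1 i * q i) * b1) :=
          Finset.sum_congr rfl fun i _ => hexp2 i
        rw [hs, Finset.sum_sub_distrib, ← Finset.sum_mul, ← hT, ← hid1, he]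
        ring
      have hba : ∀ i : Fin N, b1 * a' i = a1 i * b' - 2 * e * c i := by
        intro i
        simp only [ha']
        rw [hsplit i, hb', he]
        ring
      have f3 : b' ^ 2 * p = ∑ i, a' i ^ 2 := by
        have hsum3 : ∑ i, (b1 * a' i) ^ 2
            = ∑ i, (a1 i ^ 2 * b' ^ 2 - (a1 i * c i) * (4 * e * b') + c i ^ 2 * (4 * e ^ 2)) :=
          Finset.sum_congr rfl fun i _ => by rw [hba i]; ring
        have hmul : b1 ^ 2 * (b' ^ 2 * p) = b1 ^ 2 * ∑ i, a' i ^ 2 := by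
          have h1 : b1 ^ 2 * ∑ i, a' i ^ 2 = ∑ i, (b1 * a' i) ^ 2 := by
            rw [Finset.mul_sum]; exact Finset.sum_congr rfl fun i _ => by ring
          rw [h1, hsum3, Finset.sum_add_distrib, Finset.sum_sub_distrib, ← Finset.sum_mul,
            ← Finset.sum_mul, ← Finset.sum_mul, ← hid1, hac, ← f2]
          ring
        exact mul_left_cancel₀ (pow_ne_zero 2 hb10) hmul
      have hb'0 : b' ≠ 0 := by
        intro h0
        have hz : ∑ i, c i ^ 2 = 0 := by rw [← f2, h0, mul_zero]
        exact hj (mySumSqZeroPoly hF Finset.univ c hz j (Finset.mem_univ j))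
      have hb'deg : b'.natDegree ≤ n := by
        have hdegsum : (∑ i, c i ^ 2).natDegree ≤ 2 * b1.natDegree - 2 := by
          apply Polynomial.natDegree_sum_le_of_forall_le
          intro i _
          by_cases h0 : c i = 0
          · simp [h0]
          · have h1 : (c i).natDegree < b1.natDegree :=
              natDegree_lt_natDegree h0 (degree_modByMonic_lt _ hmon)
            rw [natDegree_pow]
            omega
        have hmuldeg : b1.natDegree + b'.natDegree = (∑ i, c i ^ 2).natDegree := by
          rw [← f2, natDegree_mul hb10 hb'0]
        omega
      exact ih b' hb'0 hb'deg a' f3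

open Polynomial in
theorem myCP {F : Type*} [Field F] (hF : ¬ IsSumSq (-1 : F)) {N : ℕ}
    (p : Polynomial F) (r : Fin N → FractionRing (Polynomial F))
    (hp : algebraMap (Polynomial F) (FractionRing (Polynomial F)) p = ∑ i, r i ^ 2) :
    ∃ q : Fin N → Polynomial F, p = ∑ i, q i ^ 2 := by
  obtain ⟨b, hb⟩ := IsLocalization.exist_integer_multiples_of_finite
    (nonZeroDivisors (Polynomial F)) r
  choose a ha using hb
  have ha' : ∀ i, algebraMap (Polynomial F) (FractionRing (Polynomial F)) (a i)
      = algebraMap (Polynomial F) (FractionRing (Polynomial F)) (b : Polynomial F) * r i :=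
    fun i => (ha i).trans (Algebra.smul_def _ _)
  have key : algebraMap (Polynomial F) (FractionRing (Polynomial F))
      ((b : Polynomial F) ^ 2 * p) = algebraMap (Polynomial F) (FractionRing (Polynomial F))
      (∑ i, a i ^ 2) := by
    rw [map_mul, map_pow, map_sum, hp, Finset.mul_sum]
    refine Finset.sum_congr rfl fun i _ => ?_
    rw [map_pow, ha']
    ring
  have hid : (b : Polynomial F) ^ 2 * p = ∑ i, a i ^ 2 :=
    IsFractionRing.injective (Polynomial F) (FractionRing (Polynomial F)) key
  exact myCPdescent hF p ((b : Polynomial F).natDegree) (b : Polynomial F)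
    (nonZeroDivisors.coe_ne_zero b) le_rfl a hid

end CP
section Plumbing

variable (K : Type*) [Field K]

noncomputable def myα : Polynomial (Polynomial K) →+* MvPolynomial (Fin 2) K :=
  Polynomial.eval₂RingHom
    (Polynomial.eval₂RingHom MvPolynomial.C (MvPolynomial.X 0)) (MvPolynomial.X 1)

noncomputable def myβ : MvPolynomial (Fin 2) K →+* Polynomial (Polynomial K) :=
  MvPolynomial.eval₂Hom (RingHom.comp Polynomial.C Polynomial.C)
    (fun i => if i = 0 then Polynomial.C Polynomial.X else Polynomial.X)

theorem myαβ : (myα K).comp (myβ K) = RingHom.id _ := by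
  apply MvPolynomial.ringHom_ext
  · intro r
    simp [myα, myβ]
  · intro i
    fin_cases i <;> simp [myα, myβ]

theorem myαβ_apply (P : MvPolynomial (Fin 2) K) : myα K (myβ K P) = P := by
  have := congrArg (fun f => (f : MvPolynomial (Fin 2) K →+* MvPolynomial (Fin 2) K) P) (myαβ K)
  simpa using this

theorem myβ_inj : Function.Injective (myβ K) :=
  Function.LeftInverse.injective (g := myα K) (myαβ_apply K)

theorem eval_myα_C (v : Fin 2 → K) (d : Polynomial K) :
    MvPolynomial.eval v (myα K (Polynomial.C d)) = Polynomial.eval (v 0) d := by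
  simp only [myα, Polynomial.coe_eval₂RingHom, Polynomial.eval₂_C]
  rw [Polynomial.hom_eval₂]
  have h1 : (MvPolynomial.eval v).comp (MvPolynomial.C (σ := Fin 2) (R := K)) = RingHom.id K := by
    ext r; simp
  rw [h1]
  simp only [MvPolynomial.eval_X]
  rw [← Polynomial.eval_map, Polynomial.map_id]

end Plumbing

section RootCancel

open Polynomial in
theorem myRootCancel {K : Type*} [Field K] (hK : ¬ IsSumSq (-1 : K)) {N : ℕ}
    (Q : Polynomial (Polynomial K)) :
    ∀ (n : ℕ) (d : Polynomial K), d ≠ 0 → d.natDegree ≤ n →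
    ∀ a : Fin N → Polynomial (Polynomial K),
      (Polynomial.C d) ^ 2 * Q = ∑ i, a i ^ 2 →
    ∃ d' : Polynomial K, (∀ z : K, Polynomial.eval z d' ≠ 0) ∧
      ∃ a' : Fin N → Polynomial (Polynomial K),
        (Polynomial.C d') ^ 2 * Q = ∑ i, a' i ^ 2 := by
  intro n
  induction n with
  | zero =>
    intro d hd hdeg a hid
    obtain ⟨cc, hcc⟩ := Polynomial.natDegree_eq_zero.mp (Nat.le_zero.mp hdeg)
    refine ⟨d, fun z => ?_, a, hid⟩
    rw [← hcc, Polynomial.eval_C]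
    intro h
    apply hd
    rw [← hcc, h, Polynomial.C_0]
  | succ n ih =>
    intro d hd hdeg a hid
    by_cases hroot : ∀ z : K, Polynomial.eval z d ≠ 0
    · exact ⟨d, hroot, a, hid⟩
    · push_neg at hroot
      obtain ⟨z, hz⟩ := hroot
      obtain ⟨d₁, hd₁⟩ :=
        (Polynomial.dvd_iff_isRoot.mpr hz : (Polynomial.X - Polynomial.C z) ∣ d)
      have hXz : (Polynomial.X - Polynomial.C z : Polynomial K) ≠ 0 :=
        Polynomial.X_sub_C_ne_zero z
      have hd₁0 : d₁ ≠ 0 := by rintro rfl; rw [mul_zero] at hd₁; exact hd hd₁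
      have hd₁deg : d₁.natDegree ≤ n := by
        have h1 := Polynomial.natDegree_mul hXz hd₁0
        rw [← hd₁, Polynomial.natDegree_X_sub_C] at h1
        omega
      -- evaluate coefficients at z
      have hzero : ∀ i, Polynomial.map (Polynomial.evalRingHom z) (a i) = 0 := by
        have hmapid := congrArg (Polynomial.mapRingHom (Polynomial.evalRingHom z)) hid
        simp only [map_mul, map_pow, map_sum, Polynomial.coe_mapRingHom, Polynomial.map_C,
          Polynomial.eval₂_at_apply] at hmapid
        rw [show (Polynomial.evalRingHom z) d = 0 from hz, Polynomial.C_0,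
          zero_pow two_ne_zero, zero_mul] at hmapid
        exact fun i => mySumSqZeroPoly hK Finset.univ
          (fun i => Polynomial.map (Polynomial.evalRingHom z) (a i)) hmapid.symm i
          (Finset.mem_univ i)
      have hdvd : ∀ i, (Polynomial.C (Polynomial.X - Polynomial.C z) : Polynomial (Polynomial K)) ∣ a i := by
        intro i
        rw [Polynomial.C_dvd_iff_dvd_coeff]
        intro k
        rw [Polynomial.dvd_iff_isRoot]
        have := congrArg (fun p => Polynomial.coeff p k) (hzero i)
        simpa [Polynomial.coeff_map] using this
      choose a₁ ha₁ using hdvd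
      have hCXz : (Polynomial.C (Polynomial.X - Polynomial.C z) : Polynomial (Polynomial K)) ≠ 0 :=
        Polynomial.C_ne_zero.mpr hXz
      have hid₁ : (Polynomial.C d₁) ^ 2 * Q = ∑ i, a₁ i ^ 2 := by
        apply mul_left_cancel₀ (pow_ne_zero 2 hCXz)
        calc (Polynomial.C (Polynomial.X - Polynomial.C z)) ^ 2 * ((Polynomial.C d₁) ^ 2 * Q)
            = (Polynomial.C d) ^ 2 * Q := by rw [hd₁, Polynomial.C_mul]; ring
          _ = ∑ i, a i ^ 2 := hid
          _ = (Polynomial.C (Polynomial.X - Polynomial.C z)) ^ 2 * ∑ i, a₁ i ^ 2 := by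
              rw [Finset.mul_sum]
              exact Finset.sum_congr rfl fun i _ => by rw [ha₁ i]; ring
      exact ih d₁ hd₁0 hd₁deg a₁ hid₁

end RootCancel
section MainDescent

set_option maxHeartbeats 1000000 in
set_option synthInstance.maxHeartbeats 400000 in
theorem myMainDescent {K : Type*} [Field K] (hK : ¬ IsSumSq (-1 : K)) {N : ℕ}
    (P : MvPolynomial (Fin 2) K)
    (r : Fin N → FractionRing (MvPolynomial (Fin 2) K))
    (hP : algebraMap (MvPolynomial (Fin 2) K) (FractionRing (MvPolynomial (Fin 2) K)) P
      = ∑ i, r i ^ 2) :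
    ∃ d : MvPolynomial (Fin 2) K, (∀ v : Fin 2 → K, MvPolynomial.eval v d ≠ 0) ∧
      ∃ b : Fin N → MvPolynomial (Fin 2) K, d ^ 2 * P = ∑ i, b i ^ 2 := by
  classical
  set ε : Polynomial (Polynomial K) →+* Polynomial (FractionRing (Polynomial K)) :=
    Polynomial.mapRingHom (algebraMap (Polynomial K) (FractionRing (Polynomial K))) with hε
  have hεinj : Function.Injective ε := by
    intro p q h
    exact Polynomial.map_injective _
      (IsFractionRing.injective (Polynomial K) (FractionRing (Polynomial K))) h
  set g : MvPolynomial (Fin 2) K →+*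
      FractionRing (Polynomial (FractionRing (Polynomial K))) :=
    (algebraMap (Polynomial (FractionRing (Polynomial K)))
      (FractionRing (Polynomial (FractionRing (Polynomial K))))).comp (ε.comp (myβ K)) with hg
  have hginj : Function.Injective g :=
    (IsFractionRing.injective (Polynomial (FractionRing (Polynomial K)))
      (FractionRing (Polynomial (FractionRing (Polynomial K))))).comp (hεinj.comp (myβ_inj K))
  set Ψ : FractionRing (MvPolynomial (Fin 2) K) →+*
      FractionRing (Polynomial (FractionRing (Polynomial K))) :=
    IsFractionRing.lift hginj with hΨ
  have hP1 : algebraMap (Polynomial (FractionRing (Polynomial K)))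
      (FractionRing (Polynomial (FractionRing (Polynomial K)))) (ε (myβ K P))
      = ∑ i, (Ψ (r i)) ^ 2 := by
    have h := congrArg Ψ hP
    rw [map_sum] at h
    simp only [map_pow] at h
    rw [hΨ, IsFractionRing.lift_algebraMap] at h
    exact h
  obtain ⟨q, hq⟩ := myCP (myFracPolyFormallyReal hK) (ε (myβ K P)) (fun i => Ψ (r i)) hP1
  -- clear the denominators of the coefficients of q
  have hspec := fun i : Fin N =>
    IsLocalization.integerNormalization_spec (nonZeroDivisors (Polynomial K)) (q i)
  choose bb hbb using hspec
  have hmapAi : ∀ i, ε (IsLocalization.integerNormalization (nonZeroDivisors (Polynomial K)) (q i))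
      = Polynomial.C (algebraMap (Polynomial K) (FractionRing (Polynomial K)) (bb i : Polynomial K))
        * q i := by
    intro i
    ext k
    rw [hε, Polynomial.coe_mapRingHom, (hbb i).2, Polynomial.coeff_smul,
      Polynomial.coeff_C_mul, Algebra.smul_def]
  set d0 : Polynomial K := ∏ i, (bb i : Polynomial K) with hd0def
  have hd0 : d0 ≠ 0 := by
    rw [hd0def, Finset.prod_ne_zero_iff]
    exact fun i _ => nonZeroDivisors.ne_zero (hbb i).1
  set a : Fin N → Polynomial (Polynomial K) := fun i =>
    IsLocalization.integerNormalization (nonZeroDivisors (Polynomial K)) (q i)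
      * Polynomial.C (∏ j ∈ Finset.univ.erase i, (bb j : Polynomial K)) with ha
  have hmapa : ∀ i, ε (a i)
      = Polynomial.C (algebraMap (Polynomial K) (FractionRing (Polynomial K)) d0) * q i := by
    intro i
    rw [ha]
    simp only [map_mul]
    rw [hmapAi i]
    rw [show ε (Polynomial.C (∏ j ∈ Finset.univ.erase i, (bb j : Polynomial K)))
        = Polynomial.C (algebraMap (Polynomial K) (FractionRing (Polynomial K))
            (∏ j ∈ Finset.univ.erase i, (bb j : Polynomial K))) from by
      rw [hε, Polynomial.coe_mapRingHom, Polynomial.map_C]]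
    have hprod : (bb i : Polynomial K) * ∏ j ∈ Finset.univ.erase i, (bb j : Polynomial K) = d0 := by
      rw [hd0def]
      exact Finset.mul_prod_erase Finset.univ (fun j => (bb j : Polynomial K))
        (Finset.mem_univ i)
    rw [← hprod, map_mul, Polynomial.C_mul]
    ring
  have hid0 : (Polynomial.C d0) ^ 2 * (myβ K P) = ∑ i, a i ^ 2 := by
    apply hεinj
    rw [map_mul, map_pow, map_sum]
    simp only [map_pow]
    rw [show ε (Polynomial.C d0)
        = Polynomial.C (algebraMap (Polynomial K) (FractionRing (Polynomial K)) d0) from by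
      rw [hε, Polynomial.coe_mapRingHom, Polynomial.map_C]]
    rw [hq, Finset.mul_sum]
    exact Finset.sum_congr rfl fun i _ => by rw [hmapa i]; ring
  obtain ⟨d', hd', a', hid'⟩ :=
    myRootCancel hK (myβ K P) d0.natDegree d0 hd0 le_rfl a hid0
  refine ⟨myα K (Polynomial.C d'), ?_, fun i => myα K (a' i), ?_⟩
  · intro v
    rw [eval_myα_C]
    exact hd' (v 0)
  · have h := congrArg (myα K) hid'
    rw [map_mul, map_pow, map_sum] at h
    simp only [map_pow] at h
    rwa [myαβ_apply] at h

end MainDescent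

set_option maxHeartbeats 1000000
set_option synthInstance.maxHeartbeats 400000

/-- Let `K` be a formally real field, `S ⊆ K[x,y]` the multiplicative set
of polynomials vanishing nowhere on `K²`, and `O = S⁻¹K[x,y]`. For every positive
integer `N`: every sum of squares in `O` is a sum of `N` squares in `O` iff every sum
of squares in `K(x,y)` is a sum of `N` squares in `K(x,y)`; i.e. the Pythagoras number
of `O` equals the Pythagoras number of `K(x,y)`. -/
theorem pythagoras_number_regular_eq_rational (K : Type*) [Field K]
    (hK : ¬ IsSumSq (-1 : K))
    (S : Submonoid (MvPolynomial (Fin 2) K))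
    (hS : ∀ g : MvPolynomial (Fin 2) K,
      g ∈ S ↔ ∀ v : Fin 2 → K, MvPolynomial.eval v g ≠ 0) :
    (∀ N : ℕ, 0 < N →
      ((∀ f : Localization S, IsSumSq f → ∃ b : Fin N → Localization S, f = ∑ i, b i ^ 2) ↔
       (∀ f : FractionRing (MvPolynomial (Fin 2) K), IsSumSq f →
          ∃ r : Fin N → FractionRing (MvPolynomial (Fin 2) K), f = ∑ i, r i ^ 2))) ∧
    sInf {N : ℕ | 0 < N ∧
        ∀ f : Localization S, IsSumSq f → ∃ b : Fin N → Localization S, f = ∑ i, b i ^ 2}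
      = sInf {N : ℕ | 0 < N ∧
          ∀ f : FractionRing (MvPolynomial (Fin 2) K), IsSumSq f →
            ∃ r : Fin N → FractionRing (MvPolynomial (Fin 2) K), f = ∑ i, r i ^ 2} := by
  classical
  have hSne : ∀ s : MvPolynomial (Fin 2) K, s ∈ S → s ≠ 0 := by
    intro s hs h0
    subst h0
    exact (hS 0).mp hs (fun _ => 0) (map_zero _)
  have hunit : ∀ y : S, IsUnit (algebraMap (MvPolynomial (Fin 2) K)
      (FractionRing (MvPolynomial (Fin 2) K)) y) := by
    intro y
    rw [isUnit_iff_ne_zero]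
    intro h
    exact hSne y y.2 (IsFractionRing.injective (MvPolynomial (Fin 2) K)
      (FractionRing (MvPolynomial (Fin 2) K)) (by rw [h, map_zero]))
  set φ : Localization S →+* FractionRing (MvPolynomial (Fin 2) K) :=
    IsLocalization.lift hunit with hφ
  have hφalg : ∀ x : MvPolynomial (Fin 2) K,
      φ (algebraMap (MvPolynomial (Fin 2) K) (Localization S) x)
      = algebraMap (MvPolynomial (Fin 2) K) (FractionRing (MvPolynomial (Fin 2) K)) x := by
    intro x
    rw [hφ]
    exact IsLocalization.lift_eq hunit x
  have main : ∀ N : ℕ, 0 < N →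
      ((∀ f : Localization S, IsSumSq f → ∃ b : Fin N → Localization S, f = ∑ i, b i ^ 2) ↔
       (∀ f : FractionRing (MvPolynomial (Fin 2) K), IsSumSq f →
          ∃ r : Fin N → FractionRing (MvPolynomial (Fin 2) K), f = ∑ i, r i ^ 2)) := by
    intro N _
    constructor
    · -- regular ⇒ rational
      intro hO f hf
      obtain ⟨n, rr, hrr⟩ := myExistsRep hf
      obtain ⟨c, hc⟩ := IsLocalization.exist_integer_multiples_of_finite
        (nonZeroDivisors (MvPolynomial (Fin 2) K)) rr
      choose aa haa using hc
      have haa' : ∀ i, algebraMap (MvPolynomial (Fin 2) K)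
          (FractionRing (MvPolynomial (Fin 2) K)) (aa i)
          = algebraMap (MvPolynomial (Fin 2) K) (FractionRing (MvPolynomial (Fin 2) K))
              (c : MvPolynomial (Fin 2) K) * rr i :=
        fun i => (haa i).trans (Algebra.smul_def _ _)
      have hsosO : IsSumSq (algebraMap (MvPolynomial (Fin 2) K) (Localization S)
          (∑ i, aa i ^ 2)) := by
        rw [map_sum]
        simp only [map_pow]
        exact mySumSq Finset.univ _
      obtain ⟨b, hb⟩ := hO _ hsosO
      have hpush : algebraMap (MvPolynomial (Fin 2) K) (FractionRing (MvPolynomial (Fin 2) K))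
          (∑ i, aa i ^ 2) = ∑ i, (φ (b i)) ^ 2 := by
        rw [← hφalg, hb, map_sum]
        simp only [map_pow]
      have hcne : algebraMap (MvPolynomial (Fin 2) K) (FractionRing (MvPolynomial (Fin 2) K))
          (c : MvPolynomial (Fin 2) K) ≠ 0 := by
        intro h
        exact nonZeroDivisors.coe_ne_zero c
          (IsFractionRing.injective (MvPolynomial (Fin 2) K)
            (FractionRing (MvPolynomial (Fin 2) K)) (by rw [h, map_zero]))
      have hGf : algebraMap (MvPolynomial (Fin 2) K) (FractionRing (MvPolynomial (Fin 2) K))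
          (∑ i, aa i ^ 2)
          = (algebraMap (MvPolynomial (Fin 2) K) (FractionRing (MvPolynomial (Fin 2) K))
              (c : MvPolynomial (Fin 2) K)) ^ 2 * f := by
        rw [map_sum]
        simp only [map_pow, haa']
        rw [hrr, Finset.mul_sum]
        exact Finset.sum_congr rfl fun i _ => by ring
      refine ⟨fun i => φ (b i) * (algebraMap (MvPolynomial (Fin 2) K)
        (FractionRing (MvPolynomial (Fin 2) K)) (c : MvPolynomial (Fin 2) K))⁻¹, ?_⟩
      have h1 : ∑ i, (φ (b i) * (algebraMap (MvPolynomial (Fin 2) K)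
          (FractionRing (MvPolynomial (Fin 2) K)) (c : MvPolynomial (Fin 2) K))⁻¹) ^ 2
          = ((algebraMap (MvPolynomial (Fin 2) K) (FractionRing (MvPolynomial (Fin 2) K))
              (c : MvPolynomial (Fin 2) K))⁻¹) ^ 2 * ∑ i, (φ (b i)) ^ 2 := by
        rw [Finset.mul_sum]
        exact Finset.sum_congr rfl fun i _ => by ring
      rw [h1, ← hpush, hGf, ← mul_assoc, ← mul_pow, inv_mul_cancel₀ hcne, one_pow, one_mul]
    · -- rational ⇒ regular
      intro hFr f hf
      obtain ⟨⟨H0, t⟩, hft0⟩ := IsLocalization.surj S f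
      have hft : f * algebraMap (MvPolynomial (Fin 2) K) (Localization S)
          (t : MvPolynomial (Fin 2) K)
          = algebraMap (MvPolynomial (Fin 2) K) (Localization S) H0 := hft0
      clear hft0
      obtain ⟨rr, hrr⟩ := hFr (φ f) (myMapSumSq φ hf)
      have hkey : algebraMap (MvPolynomial (Fin 2) K) (FractionRing (MvPolynomial (Fin 2) K))
          (H0 * (t : MvPolynomial (Fin 2) K))
          = ∑ i, (algebraMap (MvPolynomial (Fin 2) K) (FractionRing (MvPolynomial (Fin 2) K))
              (t : MvPolynomial (Fin 2) K) * rr i) ^ 2 := by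
        have h := congrArg φ hft
        rw [map_mul, hφalg, hφalg] at h
        have hsum : ∑ i, (algebraMap (MvPolynomial (Fin 2) K)
            (FractionRing (MvPolynomial (Fin 2) K)) (t : MvPolynomial (Fin 2) K) * rr i) ^ 2
            = (algebraMap (MvPolynomial (Fin 2) K) (FractionRing (MvPolynomial (Fin 2) K))
                (t : MvPolynomial (Fin 2) K)) ^ 2 * ∑ i, rr i ^ 2 := by
          rw [Finset.mul_sum]
          exact Finset.sum_congr rfl fun i _ => by ring
        rw [hsum, ← hrr, map_mul, ← h]
        ring
      obtain ⟨d, hd, b, hdb⟩ := myMainDescent hK (H0 * (t : MvPolynomial (Fin 2) K))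
        (fun i => algebraMap (MvPolynomial (Fin 2) K) (FractionRing (MvPolynomial (Fin 2) K))
          (t : MvPolynomial (Fin 2) K) * rr i) hkey
      have hdS : d ∈ S := (hS d).mpr hd
      set w : ↥S := ⟨d, hdS⟩ * t with hw
      refine ⟨fun i => IsLocalization.mk' (Localization S) (b i) w, ?_⟩
      have hu : IsUnit ((algebraMap (MvPolynomial (Fin 2) K) (Localization S)
          (w : MvPolynomial (Fin 2) K)) ^ 2) :=
        (IsLocalization.map_units (Localization S) w).pow 2
      apply hu.mul_right_cancel
      have hR : (∑ i, IsLocalization.mk' (Localization S) (b i) w ^ 2)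
          * (algebraMap (MvPolynomial (Fin 2) K) (Localization S)
              (w : MvPolynomial (Fin 2) K)) ^ 2
          = algebraMap (MvPolynomial (Fin 2) K) (Localization S)
              (d ^ 2 * (H0 * (t : MvPolynomial (Fin 2) K))) := by
        rw [Finset.sum_mul]
        rw [hdb, map_sum]
        refine Finset.sum_congr rfl fun i _ => ?_
        rw [← mul_pow, IsLocalization.mk'_spec, map_pow]
      rw [hR]
      -- LHS : f * (alg w)^2 = alg (d^2 * (H0*t))
      have hL : f * (algebraMap (MvPolynomial (Fin 2) K) (Localization S)
          (w : MvPolynomial (Fin 2) K)) ^ 2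
          = algebraMap (MvPolynomial (Fin 2) K) (Localization S)
              (d ^ 2 * (H0 * (t : MvPolynomial (Fin 2) K))) := by
        have hwR : (w : MvPolynomial (Fin 2) K) = d * (t : MvPolynomial (Fin 2) K) := rfl
        rw [hwR]
        simp only [map_mul, map_pow]
        calc f * ((algebraMap (MvPolynomial (Fin 2) K) (Localization S) d)
              * (algebraMap (MvPolynomial (Fin 2) K) (Localization S)
                  (t : MvPolynomial (Fin 2) K))) ^ 2
            = (algebraMap (MvPolynomial (Fin 2) K) (Localization S) d) ^ 2
              * (algebraMap (MvPolynomial (Fin 2) K) (Localization S)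
                  (t : MvPolynomial (Fin 2) K))
              * (f * algebraMap (MvPolynomial (Fin 2) K) (Localization S)
                  (t : MvPolynomial (Fin 2) K)) := by ring
          _ = (algebraMap (MvPolynomial (Fin 2) K) (Localization S) d) ^ 2
              * (algebraMap (MvPolynomial (Fin 2) K) (Localization S)
                  (t : MvPolynomial (Fin 2) K))
              * algebraMap (MvPolynomial (Fin 2) K) (Localization S) H0 := by rw [hft]
          _ = _ := by ring
      exact hL
  refine ⟨main, ?_⟩
  have hsets : {N : ℕ | 0 < N ∧
        ∀ f : Localization S, IsSumSq f → ∃ b : Fin N → Localization S, f = ∑ i, b i ^ 2}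
      = {N : ℕ | 0 < N ∧
          ∀ f : FractionRing (MvPolynomial (Fin 2) K), IsSumSq f →
            ∃ r : Fin N → FractionRing (MvPolynomial (Fin 2) K), f = ∑ i, r i ^ 2} := by
    ext N
    simp only [Set.mem_setOf_eq]
    constructor
    · rintro ⟨hN, h⟩
      exact ⟨hN, (main N hN).mp h⟩
    · rintro ⟨hN, h⟩
      exact ⟨hN, (main N hN).mpr h⟩
  rw [hsets]
end
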